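/- arXiv:1804.05213 — 2 statements merged into one kernel-verified Lean document; each statement's English description precedes it below -/
import Mathlib

section
/- Define s : ℤ^r × ℤ^r → G by s(η,μ) = η̂ · μ̂ · ((η+μ)^)^{-1}. Then s takes values in the cyclic subgroup generated by c, and s is bimultiplicative: s(η₁+η₂, μ) = s(η₁,μ)·s(η₂,μ) and s(η, μ₁+μ₂) = s(η,μ₁)·s(η,μ₂) for all η, η₁, η₂, μ, μ₁, μ₂ ∈ ℤ^r. -/
open Finset

/-- The lift `η̂ = β̂₁^{n₁} ⋯ β̂_r^{n_r}` of a lattice element `η = (n₁,…,n_r) ∈ ℤ^r`. -/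
noncomputable def latticeLift {G : Type*} [Group G] {r : ℕ} (β : Fin r → G)
    (η : Fin r → ℤ) : G :=
  ((List.finRange r).map (fun i => β i ^ η i)).prod

/-- The map `s(η,μ) = η̂ · μ̂ · ((η+μ)^)⁻¹`. -/
noncomputable def cocycleS {G : Type*} [Group G] {r : ℕ} (β : Fin r → G)
    (η μ : Fin r → ℤ) : G :=
  latticeLift β η * latticeLift β μ * (latticeLift β (η + μ))⁻¹

/-! Moving each factor `β̂_j ^ m_j` of `μ̂` to the left past the factors `β̂_i ^ n_i`, `i > j`,
of `η̂` costs the central factor `c ^ (n_i M_ij m_j)`, so `η̂ μ̂ = c ^ ε(η, μ) (η + μ)^`. Hence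
`s(η, μ) = c ^ ε(η, μ)`, and bimultiplicativity of `s` is bilinearity of `ε`. -/

/-- The form `ε` of the paper. -/
def lowerPairing {r : ℕ} (M : Fin r → Fin r → ℤ) (η μ : Fin r → ℤ) : ℤ :=
  ∑ i, ∑ j with j < i, η i * M i j * μ j

theorem lowerPairing_add_left {r : ℕ} (M : Fin r → Fin r → ℤ) (η₁ η₂ μ : Fin r → ℤ) :
    lowerPairing M (η₁ + η₂) μ = lowerPairing M η₁ μ + lowerPairing M η₂ μ := by
  simp only [lowerPairing, Pi.add_apply, add_mul, sum_add_distrib]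

theorem lowerPairing_add_right {r : ℕ} (M : Fin r → Fin r → ℤ) (η μ₁ μ₂ : Fin r → ℤ) :
    lowerPairing M η (μ₁ + μ₂) = lowerPairing M η μ₁ + lowerPairing M η μ₂ := by
  simp only [lowerPairing, Pi.add_apply, mul_add, sum_add_distrib]

theorem lowerPairing_succ {r : ℕ} (M : Fin (r + 1) → Fin (r + 1) → ℤ) (η μ : Fin (r + 1) → ℤ) :
    lowerPairing M η μ = (∑ i : Fin r, η i.succ * M i.succ 0) * μ 0 +
      lowerPairing (fun i j => M i.succ j.succ) (fun i => η i.succ) (fun i => μ i.succ) := by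
  simp [lowerPairing, Fin.sum_univ_succ, sum_filter, Fin.succ_lt_succ_iff, sum_add_distrib,
    sum_mul]

section Group

variable {G : Type*} [Group G]

theorem mul_zpow_eq_of_mul_eq {a b z : G} (hz : ∀ g, Commute z g) (h : a * b = z * (b * a))
    (n : ℤ) : a * b ^ n = z ^ n * (b ^ n * a) := by
  have hab : SemiconjBy a b (z * b) := by rw [SemiconjBy, h, mul_assoc]
  rw [(hab.zpow_right n).eq, (hz b).mul_zpow, mul_assoc]

theorem zpow_mul_zpow_eq_of_mul_eq {a b z : G} (hz : ∀ g, Commute z g)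
    (h : a * b = z * (b * a)) (m n : ℤ) : a ^ m * b ^ n = z ^ (m * n) * (b ^ n * a ^ m) := by
  have hba : b ^ n * a = z ^ (-n) * (a * b ^ n) := by
    rw [mul_zpow_eq_of_mul_eq hz h, ← mul_assoc, ← zpow_add, neg_add_cancel, zpow_zero, one_mul]
  rw [mul_zpow_eq_of_mul_eq (fun g => (hz g).zpow_left _) hba, ← mul_assoc, ← zpow_mul,
    ← zpow_add, show m * n + -n * m = 0 by ring, zpow_zero, one_mul]

theorem latticeLift_succ {r : ℕ} (β : Fin (r + 1) → G) (η : Fin (r + 1) → ℤ) :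
    latticeLift β η = β 0 ^ η 0 * latticeLift (fun i => β i.succ) (fun i => η i.succ) := by
  simp [latticeLift, List.finRange_succ, List.map_map, Function.comp_def]

variable {c : G}

theorem latticeLift_mul_zpow (hc : ∀ g, Commute c g) {r : ℕ} {β : Fin r → G} {b : G}
    {N : Fin r → ℤ} (hβb : ∀ i, β i * b = c ^ N i * (b * β i)) (η : Fin r → ℤ) (m : ℤ) :
    latticeLift β η * b ^ m = c ^ ((∑ i, η i * N i) * m) * (b ^ m * latticeLift β η) := by
  induction r with
  | zero => simp [latticeLift]
  | succ r ih =>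
    have hcz : ∀ k : ℤ, ∀ g, Commute (c ^ k) g := fun k g => (hc g).zpow_left k
    have hPb := ih (fun i => hβb i.succ) (fun i => η i.succ)
    rw [latticeLift_succ, Fin.sum_univ_succ]
    generalize latticeLift (fun i => β i.succ) (fun i => η i.succ) = P at hPb ⊢
    generalize ∑ i : Fin r, η i.succ * N i.succ = S at hPb ⊢
    calc β 0 ^ η 0 * P * b ^ m
        = c ^ (S * m) * (β 0 ^ η 0 * b ^ m * P) := by
          rw [mul_assoc, hPb, ← (hcz _ _).left_comm, mul_assoc]
      _ = c ^ (S * m) * (c ^ (N 0 * (η 0 * m)) * (b ^ m * β 0 ^ η 0) * P) := by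
          rw [zpow_mul_zpow_eq_of_mul_eq (hcz _) (hβb 0), ← zpow_mul]
      _ = c ^ ((η 0 * N 0 + S) * m) * (b ^ m * (β 0 ^ η 0 * P)) := by
          rw [mul_assoc (c ^ _), ← mul_assoc (c ^ (S * m)), ← zpow_add, mul_assoc (b ^ m)]
          congr 2
          ring

theorem latticeLift_mul_latticeLift (hc : ∀ g, Commute c g) {r : ℕ} {β : Fin r → G}
    {M : Fin r → Fin r → ℤ} (hβ : ∀ i j, β i * β j = c ^ M i j * (β j * β i))
    (η μ : Fin r → ℤ) :
    latticeLift β η * latticeLift β μ = c ^ lowerPairing M η μ * latticeLift β (η + μ) := by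
  induction r with
  | zero => simp [latticeLift, lowerPairing]
  | succ r ih =>
    have hcz : ∀ k : ℤ, ∀ g, Commute (c ^ k) g := fun k g => (hc g).zpow_left k
    have hPQ := ih (fun i j => hβ i.succ j.succ) (fun i => η i.succ) (fun i => μ i.succ)
    have hPb := latticeLift_mul_zpow hc (fun i => hβ i.succ 0) (fun i => η i.succ) (μ 0)
    rw [latticeLift_succ β η, latticeLift_succ β μ, latticeLift_succ β (η + μ), lowerPairing_succ]
    generalize latticeLift (fun i => β i.succ) (fun i => η i.succ) = P at hPQ hPb ⊢
    generalize latticeLift (fun i => β i.succ) (fun i => μ i.succ) = Q at hPQ ⊢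
    generalize latticeLift (fun i => β i.succ) (_ + _) = R at hPQ ⊢
    generalize (∑ i : Fin r, η i.succ * M i.succ 0) * μ 0 = S at hPb ⊢
    generalize lowerPairing _ _ _ = E at hPQ ⊢
    calc β 0 ^ η 0 * P * (β 0 ^ μ 0 * Q)
        = β 0 ^ η 0 * (P * β 0 ^ μ 0) * Q := by simp only [mul_assoc]
      _ = c ^ S * (β 0 ^ η 0 * β 0 ^ μ 0 * (P * Q)) := by
        rw [hPb, ← (hcz S _).left_comm]; simp only [mul_assoc]
      _ = c ^ (S + E) * (β 0 ^ (η + μ) 0 * R) := by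
        rw [hPQ, ← zpow_add, ← (hcz E _).left_comm, ← mul_assoc, ← zpow_add]; rfl

theorem cocycleS_eq_zpow_lowerPairing (hc : ∀ g, Commute c g) {r : ℕ} {β : Fin r → G}
    {M : Fin r → Fin r → ℤ} (hβ : ∀ i j, β i * β j = c ^ M i j * (β j * β i))
    (η μ : Fin r → ℤ) : cocycleS β η μ = c ^ lowerPairing M η μ := by
  rw [cocycleS, latticeLift_mul_latticeLift hc hβ, mul_inv_cancel_right]

end Group

theorem cocycleS_mem_zpowers_and_bimul_general {G : Type*} [Group G] {r : ℕ}
    (c : G) (hc : ∀ g : G, c * g = g * c)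
    (M : Fin r → Fin r → ℤ)
    (β : Fin r → G)
    (hβ : ∀ i j, β i * β j * (β i)⁻¹ * (β j)⁻¹ = c ^ (M i j)) :
    (∀ η μ : Fin r → ℤ, cocycleS β η μ ∈ Subgroup.zpowers c) ∧
    (∀ η₁ η₂ μ : Fin r → ℤ,
      cocycleS β (η₁ + η₂) μ = cocycleS β η₁ μ * cocycleS β η₂ μ) ∧
    (∀ η μ₁ μ₂ : Fin r → ℤ,
      cocycleS β η (μ₁ + μ₂) = cocycleS β η μ₁ * cocycleS β η μ₂) := by
  have hβc : ∀ i j, β i * β j = c ^ M i j * (β j * β i) := fun i j => by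
    rw [← hβ i j]; group
  have hs := cocycleS_eq_zpow_lowerPairing hc hβc
  refine ⟨fun η μ => hs η μ ▸ Subgroup.zpow_mem_zpowers c _, fun η₁ η₂ μ => ?_, fun η μ₁ μ₂ => ?_⟩
  · rw [hs, hs, hs, lowerPairing_add_left, zpow_add]
  · rw [hs, hs, hs, lowerPairing_add_right, zpow_add]

/-- The map `s(η,μ) = η̂ · μ̂ · ((η+μ)^)⁻¹` takes values in the cyclic subgroup generated by `c`,
and is bimultiplicative in both arguments. -/
theorem cocycleS_mem_zpowers_and_bimul {G : Type*} [Group G] {r : ℕ} (hr : 1 ≤ r)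
    (c : G) (hc : ∀ g : G, c * g = g * c) (hc2 : c ^ 2 = 1)
    (M : Fin r → Fin r → ℤ) (hM : ∀ i j, M i j = M j i)
    (β : Fin r → G)
    (hβ : ∀ i j, β i * β j * (β i)⁻¹ * (β j)⁻¹ = c ^ (M i j)) :
    (∀ η μ : Fin r → ℤ, cocycleS β η μ ∈ Subgroup.zpowers c) ∧
    (∀ η₁ η₂ μ : Fin r → ℤ,
      cocycleS β (η₁ + η₂) μ = cocycleS β η₁ μ * cocycleS β η₂ μ) ∧
    (∀ η μ₁ μ₂ : Fin r → ℤ,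
      cocycleS β η (μ₁ + μ₂) = cocycleS β η μ₁ * cocycleS β η μ₂) :=
  cocycleS_mem_zpowers_and_bimul_general c hc M β hβ
end

section
/- For η ∈ ℤ^r set η_ε = (1/2)·B^{-1}εη ∈ ℝ^r (B is invertible since it is positive definite). Then the map Ψ : T⋉Π^bas → T⋉Π^triv defined by Ψ(t,η,z) = (t + [η_ε], η, z) is a group isomorphism. In particular the groups T⋉Π^bas and T⋉Π^triv are (non-canonically) isomorphic. -/
open Finset

/-- The torus `T = ℝ^r/ℤ^r`. -/
abbrev Torus (r : ℕ) := Fin r → AddCircle (1 : ℝ)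

/-- `κ_η(t) = exp(−2πi·xᵀBη)` for `t = [x] ∈ T = ℝ^r/ℤ^r` and `η ∈ ℤ^r`, well defined since
`B` has integer entries. -/
noncomputable def kappaChar {r : ℕ} (B : Matrix (Fin r) (Fin r) ℤ)
    (η : Fin r → ℤ) (t : Torus r) : Circle :=
  ∏ i, AddCircle.toCircle ((-(∑ j, B i j * η j)) • t i)

/-- The underlying set `T × ℤ^r × 𝕋` of the groups `T⋉Π^bas` and `T⋉Π^triv`. -/
abbrev TPi (r : ℕ) := Torus r × (Fin r → ℤ) × Circle

/-- The multiplication `(t₁,η₁,z₁)·(t₂,η₂,z₂) = (t₁+t₂, η₁+η₂, κ_{η₁}(t₂)·σ(η₁,η₂)·z₁z₂)`. -/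
noncomputable def tpiMul {r : ℕ} (B : Matrix (Fin r) (Fin r) ℤ)
    (σ : (Fin r → ℤ) → (Fin r → ℤ) → Circle) (p q : TPi r) : TPi r :=
  (p.1 + q.1, p.2.1 + q.2.1, kappaChar B p.2.1 q.1 * σ p.2.1 q.2.1 * (p.2.2 * q.2.2))

/-- The element `−1` of the circle group. -/
noncomputable def negOneCircle : Circle := ⟨-1, by norm_num [Submonoid.unitSphere]⟩

/-- The `off-diagonal` matrix `ε` with `ε_{ij} = B_{ij}` for `i > j`, and `0` for `i ≤ j`. -/
def epsMatrix {r : ℕ} (B : Matrix (Fin r) (Fin r) ℤ) : Matrix (Fin r) (Fin r) ℤ :=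
  fun i j => if j < i then B i j else 0

/-- The sign cocycle `σ_B(η₁,η₂) = (−1)^{η₁ᵀεη₂}`. -/
noncomputable def sigmaB {r : ℕ} (B : Matrix (Fin r) (Fin r) ℤ)
    (η₁ η₂ : Fin r → ℤ) : Circle :=
  negOneCircle ^ (∑ i, ∑ j, η₁ i * epsMatrix B i j * η₂ j)

/-- `η_ε = (1/2)·B⁻¹εη ∈ ℝ^r`. -/
noncomputable def etaEps {r : ℕ} (B : Matrix (Fin r) (Fin r) ℤ) (η : Fin r → ℤ) :
    Fin r → ℝ :=
  (2 : ℝ)⁻¹ • ((B.map ((↑) : ℤ → ℝ))⁻¹.mulVec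
    (((epsMatrix B).map ((↑) : ℤ → ℝ)).mulVec (fun i => (η i : ℝ))))

/-- The map `Ψ(t,η,z) = (t + [η_ε], η, z)`. -/
noncomputable def psiMap {r : ℕ} (B : Matrix (Fin r) (Fin r) ℤ) (p : TPi r) : TPi r :=
  (p.1 + fun i => ((etaEps B p.2.1 i : ℝ) : AddCircle (1 : ℝ)), p.2.1, p.2.2)

/-!
`Ψ` shifts the torus coordinate by `[η_ε]`, which is additive in `η`, so it is a bijection
compatible with the first two coordinates. In the circle coordinate it creates the extra factor
`κ_{η₁}([η₂_ε]) = exp(−2πi·η₂_εᵀBη₁) = exp(−πi·η₁ᵀεη₂) = σ_B(η₁,η₂)`, where symmetry of `B`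
lets `B` cancel against `B⁻¹`.
-/

open Matrix

lemma AddCircle.toCircle_coe_intCast_div_two (m : ℤ) :
    AddCircle.toCircle ((m / 2 : ℝ) : AddCircle (1 : ℝ)) = negOneCircle ^ m := by
  have half : AddCircle.toCircle ((1 / 2 : ℝ) : AddCircle (1 : ℝ)) = negOneCircle := by
    ext
    rw [AddCircle.toCircle_apply_mk, show 2 * Real.pi / 1 * (1 / 2) = Real.pi by ring,
      Circle.coe_exp, Complex.exp_pi_mul_I]
    rfl
  rw [div_eq_mul_one_div, ← zsmul_eq_mul, AddCircle.coe_zsmul, AddCircle.toCircle_zsmul, half]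

lemma negOneCircle_inv : negOneCircle⁻¹ = negOneCircle :=
  inv_eq_of_mul_eq_one_right (by ext; rw [Circle.coe_mul, Circle.coe_one]; norm_num [negOneCircle])

lemma AddCircle.toCircle_sum {T : ℝ} {ι : Type*} (s : Finset ι) (f : ι → AddCircle T) :
    AddCircle.toCircle (∑ i ∈ s, f i) = ∏ i ∈ s, AddCircle.toCircle (f i) :=
  map_prod AddCircle.toCircle_addChar.toMonoidHom (fun i => Multiplicative.ofAdd (f i)) s

lemma dotProduct_mulVec_inv_mulVec {n K : Type*} [Fintype n] [DecidableEq n] [CommRing K]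
    {A : Matrix n n K} (hA : A.IsSymm) (hdet : IsUnit A.det) (u v : n → K) :
    A *ᵥ u ⬝ᵥ A⁻¹ *ᵥ v = u ⬝ᵥ v := by
  rw [← hA.eq, mulVec_transpose, ← dotProduct_mulVec, hA.eq, mulVec_mulVec,
    mul_nonsing_inv A hdet, one_mulVec]

section

variable {r : ℕ} (B : Matrix (Fin r) (Fin r) ℤ)

lemma kappaChar_eq_toCircle (η : Fin r → ℤ) (t : Torus r) :
    kappaChar B η t = AddCircle.toCircle (∑ i, (-(B *ᵥ η) i) • t i) :=
  (AddCircle.toCircle_sum _ _).symm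

lemma kappaChar_add (η : Fin r → ℤ) (t s : Torus r) :
    kappaChar B η (t + s) = kappaChar B η t * kappaChar B η s := by
  simp only [kappaChar_eq_toCircle, Pi.add_apply, smul_add, Finset.sum_add_distrib,
    AddCircle.toCircle_add]

lemma kappaChar_coe (η : Fin r → ℤ) (x : Fin r → ℝ) :
    kappaChar B η (fun i => (x i : AddCircle (1 : ℝ)))
      = (AddCircle.toCircle ((B.map ((↑) : ℤ → ℝ) *ᵥ (fun i => (η i : ℝ)) ⬝ᵥ x : ℝ) :
          AddCircle (1 : ℝ)))⁻¹ := by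
  have term (i : Fin r) : (-(B *ᵥ η) i) • (x i : AddCircle (1 : ℝ))
      = ((-((B.map ((↑) : ℤ → ℝ) *ᵥ (fun i => (η i : ℝ))) i * x i) : ℝ) : AddCircle (1 : ℝ)) := by
    rw [← AddCircle.coe_zsmul, zsmul_eq_mul, Int.cast_neg, neg_mul]
    congr 3
    exact (Int.castRingHom ℝ).map_mulVec B η i
  rw [kappaChar_eq_toCircle, ← AddCircle.toCircle_neg, Finset.sum_congr rfl fun i _ => term i,
    ← QuotientAddGroup.mk_sum, Finset.sum_neg_distrib]
  rfl

lemma sigmaB_eq_zpow_dotProduct (η₁ η₂ : Fin r → ℤ) :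
    sigmaB B η₁ η₂ = negOneCircle ^ (η₁ ⬝ᵥ epsMatrix B *ᵥ η₂) := by
  simp only [sigmaB, dotProduct, mulVec, Finset.mul_sum, mul_assoc]

lemma mulVec_dotProduct_etaEps (hB : B.IsSymm) (hdet : IsUnit (B.map ((↑) : ℤ → ℝ)).det)
    (η₁ η₂ : Fin r → ℤ) :
    B.map ((↑) : ℤ → ℝ) *ᵥ (fun i => (η₁ i : ℝ)) ⬝ᵥ etaEps B η₂
      = ((η₁ ⬝ᵥ epsMatrix B *ᵥ η₂ : ℤ) : ℝ) / 2 := by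
  rw [etaEps, dotProduct_smul, dotProduct_mulVec_inv_mulVec (hB.map _) hdet, smul_eq_mul,
    inv_mul_eq_div]
  congr 1
  refine (((Int.castRingHom ℝ).map_dotProduct _ _).trans ?_).symm
  congr 1
  funext i
  exact (Int.castRingHom ℝ).map_mulVec _ _ i

lemma kappaChar_etaEps (hB : B.IsSymm) (hdet : IsUnit (B.map ((↑) : ℤ → ℝ)).det)
    (η₁ η₂ : Fin r → ℤ) :
    kappaChar B η₁ (fun i => (etaEps B η₂ i : AddCircle (1 : ℝ))) = sigmaB B η₁ η₂ := by
  rw [kappaChar_coe, mulVec_dotProduct_etaEps B hB hdet, AddCircle.toCircle_coe_intCast_div_two,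
    ← _root_.inv_zpow, negOneCircle_inv, sigmaB_eq_zpow_dotProduct]

lemma etaEps_add (η₁ η₂ : Fin r → ℤ) : etaEps B (η₁ + η₂) = etaEps B η₁ + etaEps B η₂ := by
  have cast_add : (fun i => ((η₁ + η₂) i : ℝ)) = (fun i => (η₁ i : ℝ)) + fun i => (η₂ i : ℝ) := by
    funext i
    push_cast [Pi.add_apply]
    rfl
  rw [etaEps, cast_add, mulVec_add, mulVec_add, smul_add, etaEps, etaEps]

lemma psiMap_bijective : Function.Bijective (psiMap B) := by
  refine Function.bijective_iff_has_inverse.mpr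
    ⟨fun p => (p.1 - fun i => (etaEps B p.2.1 i : AddCircle (1 : ℝ)), p.2.1, p.2.2),
      fun p => ?_, fun p => ?_⟩ <;> simp [psiMap]

lemma psiMap_tpiMul (hB : B.IsSymm) (hdet : IsUnit (B.map ((↑) : ℤ → ℝ)).det) (a b : TPi r) :
    psiMap B (tpiMul B (sigmaB B) a b)
      = tpiMul B (fun _ _ => (1 : Circle)) (psiMap B a) (psiMap B b) := by
  obtain ⟨t₁, η₁, z₁⟩ := a
  obtain ⟨t₂, η₂, z₂⟩ := b
  simp only [psiMap, tpiMul, etaEps_add, Pi.add_apply, AddCircle.coe_add, kappaChar_add,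
    kappaChar_etaEps B hB hdet, mul_one, Prod.mk.injEq, and_true]
  funext i
  simp only [Pi.add_apply]
  abel

end

theorem psiMap_isom_general {r : ℕ} (B : Matrix (Fin r) (Fin r) ℤ)
    (hBsymm : B.IsSymm) (hBpos : (B.map ((↑) : ℤ → ℝ)).PosDef) :
    Function.Bijective (psiMap B) ∧
    (∀ a b : TPi r,
      psiMap B (tpiMul B (sigmaB B) a b)
        = tpiMul B (fun _ _ => (1 : Circle)) (psiMap B a) (psiMap B b)) :=
  ⟨psiMap_bijective B, psiMap_tpiMul B hBsymm ((isUnit_iff_isUnit_det _).mp hBpos.isUnit)⟩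

/-- The map `Ψ : T⋉Π^bas → T⋉Π^triv`, `Ψ(t,η,z) = (t + [η_ε], η, z)`, is a group
isomorphism; in particular the groups `T⋉Π^bas` and `T⋉Π^triv` are (non-canonically)
isomorphic. -/
theorem psiMap_isom {r : ℕ} (hr : 1 ≤ r) (B : Matrix (Fin r) (Fin r) ℤ)
    (hBsymm : B.IsSymm) (hBpos : (B.map ((↑) : ℤ → ℝ)).PosDef) :
    Function.Bijective (psiMap B) ∧
    (∀ a b : TPi r,
      psiMap B (tpiMul B (sigmaB B) a b)
        = tpiMul B (fun _ _ => (1 : Circle)) (psiMap B a) (psiMap B b)) :=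
  psiMap_isom_general B hBsymm hBpos
end
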